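/- arXiv:1512.08823 — 5 statements merged into one kernel-verified Lean document; each statement's English description precedes it below -/
import Mathlib

section
/- Let A = (Σ, Q, δ, I) be a top-down tree automaton and let R be a strict partial order on Q (irreflexive and transitive) that is contained in the downward trace inclusion ⊆dw. Then P(id, R) is good for pruning, i.e., L(Prune(A, P(id, R))) = L(A), where P(id, R) relates two rules ⟨p,σ,r₁⋯rₙ⟩ and ⟨p,σ,r′₁⋯r′ₙ⟩ with the same source state and symbol iff rᵢ (R ∪ id) r′ᵢ for all i and rᵢ R r′ᵢ for some i. -/
/-- A tree over a ranked alphabet: a partial map from nodes (lists of child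
indices) to symbols, with finite, prefix-closed domain respecting ranks. -/
structure RTree (α : Type) (rank : α → ℕ) where
  label : List ℕ → Option α
  finite : Set.Finite {v : List ℕ | label v ≠ none}
  prefixClosed : ∀ v i, label (v ++ [i]) ≠ none → ∃ a, label v = some a ∧ i < rank a

namespace RTree

variable {α : Type} {rank : α → ℕ}

/-- A tree is closed if every node has all the children prescribed by the rank
of its symbol. -/
def IsClosed (t : RTree α rank) : Prop :=
  ∀ v a, t.label v = some a → ∀ i, i < rank a → t.label (v ++ [i]) ≠ none

/-- The domain of a run on `t`: the nodes of `t` together with all (possibly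
dangling) children of nodes of `t`. -/
def inRunDom (t : RTree α rank) (v : List ℕ) : Prop :=
  t.label v ≠ none ∨ ∃ v' i a, v = v' ++ [i] ∧ t.label v' = some a ∧ i < rank a

/-- A leaf of `t`: a node of `t` with no children in `t`. -/
def IsLeaf (t : RTree α rank) (v : List ℕ) : Prop :=
  t.label v ≠ none ∧ ∀ i, t.label (v ++ [i]) = none

end RTree

/-- A (nondeterministic, top-down) tree automaton, with a distinguished final
state `top`; leaf rules have right-hand side `[top]`, and rules for symbols of
positive rank have right-hand side of length equal to the rank. -/
structure TDTA (Q α : Type) (rank : α → ℕ) where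
  top : Q
  init : Set Q
  delta : Set (Q × α × List Q)
  rank_ok : ∀ τ ∈ delta, (rank τ.2.1 = 0 → τ.2.2 = [top]) ∧
    (0 < rank τ.2.1 → τ.2.2.length = rank τ.2.1)

namespace TDTA

variable {Q α : Type} {rank : α → ℕ}

/-- The right-hand side that a run `π` must match at node `v` labelled `a`. -/
def rhsOf (A : TDTA Q α rank) (a : α) (π : List ℕ → Q) (v : List ℕ) : List Q :=
  if rank a = 0 then [A.top] else (List.range (rank a)).map fun i => π (v ++ [i])

/-- `π` is a run of `A` on the tree `t`. -/
def IsRun (A : TDTA Q α rank) (t : RTree α rank) (π : List ℕ → Q) : Prop :=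
  ∀ v a, t.label v = some a → (π v, a, A.rhsOf a π v) ∈ A.delta

/-- The downward language of a state: closed trees accepted from it. -/
def dlang (A : TDTA Q α rank) (q : Q) : Set (RTree α rank) :=
  {t | t.IsClosed ∧ ∃ π, A.IsRun t π ∧ π [] = q}

/-- The language of the automaton. -/
def lang (A : TDTA Q α rank) : Set (RTree α rank) :=
  {t | ∃ q ∈ A.init, t ∈ A.dlang q}

/-- Pruning: keep exactly the transitions that are maximal w.r.t. `P`. -/
def prune (A : TDTA Q α rank) (P : Q × α × List Q → Q × α × List Q → Prop) :
    TDTA Q α rank where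
  top := A.top
  init := A.init
  delta := {τ | τ ∈ A.delta ∧ ¬∃ τ' ∈ A.delta, P τ τ'}
  rank_ok := fun τ hτ => A.rank_ok τ hτ.1

/-- Downward trace inclusion `q ⊆dw r`. -/
def dwIncl (A : TDTA Q α rank) (q r : Q) : Prop :=
  ∀ t : RTree α rank, t.IsClosed → ∀ π, A.IsRun t π → π [] = q →
    ∃ π', A.IsRun t π' ∧ π' [] = r

/-- Upward trace inclusion `q ⊆up(R) r` induced by a relation `R`. -/
def upIncl (A : TDTA Q α rank) (R : Q → Q → Prop) (q r : Q) : Prop :=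
  (q = A.top → r = A.top) ∧
  ∀ (t : RTree α rank) (v : List ℕ), t.IsLeaf v →
    ∀ πq, A.IsRun t πq → πq v = q →
      ∃ πr, A.IsRun t πr ∧ πr v = r ∧
        (∀ v', v' <+: v → πq v' ∈ A.init → πr v' ∈ A.init) ∧
        ∀ v' x, v' <+: v → v' ≠ v → t.inRunDom (v' ++ [x]) → ¬(v' ++ [x]) <+: v →
          R (πq (v' ++ [x])) (πr (v' ++ [x]))

/-- `D` is a downward simulation on `A`. -/
def IsDwSim (A : TDTA Q α rank) (D : Q → Q → Prop) : Prop :=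
  ∀ q r, D q r → (q = A.top → r = A.top) ∧
    ∀ a qs, (q, a, qs) ∈ A.delta →
      ∃ rs, (r, a, rs) ∈ A.delta ∧ List.Forall₂ D qs rs

/-- The maximal downward simulation `≼dw` (the union of all downward
simulations). -/
def dwSim (A : TDTA Q α rank) (q r : Q) : Prop :=
  ∃ D, A.IsDwSim D ∧ D q r

/-- `U` is an upward simulation on `A` induced by `R`. -/
def IsUpSim (A : TDTA Q α rank) (R U : Q → Q → Prop) : Prop :=
  ∀ q r, U q r → (q = A.top → r = A.top) ∧ (q ∈ A.init → r ∈ A.init) ∧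
    ∀ q' a qs, (q', a, qs) ∈ A.delta → ∀ i : Fin qs.length, qs.get i = q →
      ∃ r' rs, ∃ hlen : rs.length = qs.length, (r', a, rs) ∈ A.delta ∧
        rs.get (Fin.cast hlen.symm i) = r ∧ U q' r' ∧
        ∀ j : Fin qs.length, j ≠ i → R (qs.get j) (rs.get (Fin.cast hlen.symm j))

/-- The maximal upward simulation `≼up(R)` induced by `R`. -/
def upSim (A : TDTA Q α rank) (R : Q → Q → Prop) (q r : Q) : Prop :=
  ∃ U, A.IsUpSim R U ∧ U q r

/-- `W` is a downup-relation on `A`. -/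
def IsDownUp (A : TDTA Q α rank) (W : Q → Q → Prop) : Prop :=
  ∀ p q, W p q → ∀ (t : RTree α rank) (π : List ℕ → Q), A.IsRun t π → π [] = p →
    ∃ π', A.IsRun t π' ∧ π' [] = q ∧ ∀ v, t.inRunDom v → A.upSim W (π v) (π' v)

end TDTA

/-- The strict version `S ∖ S⁻¹` of a relation `S`. -/
def strictOf {Q : Type} (S : Q → Q → Prop) (q r : Q) : Prop := S q r ∧ ¬S r q

/-- Lifting of relations to tuples: pointwise `Dw` everywhere and `Ds` at some
position. -/
def liftStrict {Q : Type} (Dw Ds : Q → Q → Prop) (qs rs : List Q) : Prop :=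
  List.Forall₂ Dw qs rs ∧
    ∃ (i : ℕ) (h : i < qs.length) (h' : i < rs.length), Ds (qs.get ⟨i, h⟩) (rs.get ⟨i, h'⟩)

/-- The pruning relation `P(U, Dl)` comparing transitions with the same symbol:
sources by `U`, target tuples by `Dl`. -/
def pruneRel {Q α : Type} (U : Q → Q → Prop) (Dl : List Q → List Q → Prop) :
    Q × α × List Q → Q × α × List Q → Prop :=
  fun τ τ' => U τ.1 τ'.1 ∧ τ.2.1 = τ'.2.1 ∧ Dl τ.2.2 τ'.2.2

/-!
Fix a closed tree whose root carries `a` and is accepted from `q`. Among the rules `⟨q, a, rs⟩`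
whose children tuple `rs` still accepts the subtrees, pick one that is maximal for the tuple
order; there is one because these tuples have bounded length over a finite alphabet of states.
That rule survives pruning: a rule dominating it would have a tuple that is componentwise
`R`-larger or equal, hence, as `R ⊆ ⊆dw`, would accept the subtrees as well, contradicting
maximality. Recursing into the subtrees yields an accepting run of the pruned automaton.
-/

namespace RTree

variable {α : Type} {rank : α → ℕ}

def dom (t : RTree α rank) : Set (List ℕ) := {v | t.label v ≠ none}

lemma label_ne_none_of_prefix {t : RTree α rank} {u v : List ℕ} (hv : t.label v ≠ none)
    (huv : u <+: v) : t.label u ≠ none := by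
  induction v using List.reverseRecOn with
  | nil => rwa [List.prefix_nil.mp huv]
  | append_singleton v i ih =>
    rcases List.prefix_concat_iff.mp huv with rfl | huv
    · exact hv
    · obtain ⟨a, ha, -⟩ := t.prefixClosed v i hv
      exact ih (by simp [ha]) huv

lemma lt_rank_of_label_cons_ne_none {t : RTree α rank} {a : α} (ha : t.label [] = some a)
    {i : ℕ} {w : List ℕ} (h : t.label (i :: w) ≠ none) : i < rank a := by
  obtain ⟨b, hb, hi⟩ := t.prefixClosed [] i (label_ne_none_of_prefix h ⟨w, rfl⟩)
  rw [ha] at hb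
  exact Option.some_injective _ hb ▸ hi

def subtree (t : RTree α rank) (i : ℕ) : RTree α rank where
  label w := t.label (i :: w)
  finite := t.finite.preimage List.cons_injective.injOn
  prefixClosed w j := t.prefixClosed (i :: w) j

lemma IsClosed.subtree {t : RTree α rank} (ht : t.IsClosed) (i : ℕ) : (t.subtree i).IsClosed :=
  fun w => ht (i :: w)

lemma ncard_dom_subtree_lt (t : RTree α rank) (ht : t.label [] ≠ none) (i : ℕ) :
    (t.subtree i).dom.ncard < t.dom.ncard := by
  rw [← Set.ncard_image_of_injective _ (List.cons_injective (a := i))]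
  refine Set.ncard_lt_ncard ⟨?_, fun hsub => ?_⟩ t.finite
  · rintro _ ⟨w, hw, rfl⟩
    exact hw
  · obtain ⟨w, -, hw⟩ := hsub ht
    exact List.cons_ne_nil _ _ hw

end RTree

lemma Set.Finite.exists_forall_not_rel {β : Type*} {r : β → β → Prop} [IsTrans β r]
    [Std.Irrefl r] {s : Set β} (hs : s.Finite) (hne : s.Nonempty) :
    ∃ x ∈ s, ∀ y ∈ s, ¬r x y := by
  have := hs.to_subtype
  have : IsTrans s fun x y => r y x := ⟨fun _ _ _ h₁ h₂ => _root_.trans h₂ h₁⟩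
  have : Std.Irrefl fun x y : s => r y x := ⟨fun x => irrefl (r := r) x.1⟩
  obtain ⟨x, -, hx⟩ := (Finite.wellFounded_of_trans_of_irrefl fun x y : s => r y x).has_min
    Set.univ ⟨⟨_, hne.some_mem⟩, trivial⟩
  exact ⟨x, x.2, fun y hy hxy => hx ⟨y, hy⟩ trivial hxy⟩

section LiftStrict

variable {Q : Type} {R : Q → Q → Prop}

instance [Std.Irrefl R] : Std.Irrefl (liftStrict (fun x y => R x y ∨ x = y) R) :=
  ⟨fun _ ⟨_, _, _, _, h⟩ => irrefl _ h⟩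

instance [IsTrans Q R] : IsTrans (List Q) (liftStrict (fun x y => R x y ∨ x = y) R) := by
  refine ⟨fun xs ys zs ⟨hxy, i, hi, hi', hR⟩ ⟨hyz, _⟩ => ?_⟩
  have hlen := hyz.length_eq
  have hi'' : i < zs.length := hlen ▸ hi'
  refine ⟨List.forall₂_of_length_eq_of_get (hxy.length_eq.trans hlen) fun j hj hj'' => ?_,
    i, hi, hi'', ?_⟩
  · have hj' : j < ys.length := hlen ▸ hj''
    rcases hxy.get hj hj', hyz.get hj' hj'' with ⟨h₁ | h₁, h₂ | h₂⟩
    · exact .inl (_root_.trans h₁ h₂)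
    · exact .inl (h₂ ▸ h₁)
    · exact .inl (h₁ ▸ h₂)
    · exact .inr (h₁.trans h₂)
  · rcases hyz.get hi' hi'' with h | h
    · exact _root_.trans hR h
    · exact h ▸ hR

end LiftStrict

namespace TDTA

variable {Q α : Type} {rank : α → ℕ} (A : TDTA Q α rank)

lemma finite_rhs [Finite Q] (q : Q) (a : α) : {rs | (q, a, rs) ∈ A.delta}.Finite := by
  refine (List.finite_length_le Q (rank a + 1)).subset fun rs hrs => ?_
  obtain ⟨hleaf, hinner⟩ : (rank a = 0 → rs = [A.top]) ∧ (0 < rank a → rs.length = rank a) :=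
    A.rank_ok _ hrs
  rcases Nat.eq_zero_or_pos (rank a) with h | h
  · simp [hleaf h, h]
  · simp [hinner h]

lemma mem_dlang_of_label_nil_eq_none {t : RTree α rank} (ht : t.IsClosed)
    (h : t.label [] = none) (q : Q) : t ∈ A.dlang q := by
  refine ⟨ht, fun _ => q, fun v a hv => ?_, rfl⟩
  exact absurd h (RTree.label_ne_none_of_prefix (v := v) (by simp [hv]) List.nil_prefix)

lemma mem_dlang_of_mem_delta {t : RTree α rank} (ht : t.IsClosed) {a : α}
    (ha : t.label [] = some a) {q : Q} {rs : List Q} (hrs : (q, a, rs) ∈ A.delta)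
    (hsub : ∀ i (hi : i < rs.length), t.subtree i ∈ A.dlang rs[i]) : t ∈ A.dlang q := by
  choose σ hσ hσ_root using fun i hi => (hsub i hi).2
  let π : List ℕ → Q
    | [] => q
    | i :: w => if hi : i < rs.length then σ i hi w else q
  have hπσ : ∀ i (hi : i < rs.length), (fun w => π (i :: w)) = σ i hi := fun i hi => by
    funext w
    simp [π, hi]
  have hleaf : rank a = 0 → rs = [A.top] := (A.rank_ok _ hrs).1
  have hlen : 0 < rank a → rs.length = rank a := (A.rank_ok _ hrs).2
  have hrhs : A.rhsOf a π [] = rs := by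
    by_cases hr : rank a = 0
    · simp [rhsOf, hr, hleaf hr]
    · refine List.ext_getElem (by simp [rhsOf, hr, hlen (by omega)]) fun i hi _ => ?_
      have hi : i < rs.length := by simp_all [rhsOf]
      rw [← hσ_root i hi, ← hπσ i hi]
      simp [rhsOf, hr]
  refine ⟨ht, π, fun v b hv => ?_, rfl⟩
  cases v with
  | nil =>
    obtain rfl : a = b := Option.some_injective _ (ha.symm.trans hv)
    rw [hrhs]
    exact hrs
  | cons i w =>
    have hia := RTree.lt_rank_of_label_cons_ne_none ha (i := i) (w := w) (by simp [hv])
    have hi : i < rs.length := hlen (by omega) ▸ hia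
    have hrun : A.IsRun (t.subtree i) (fun w => π (i :: w)) := hπσ i hi ▸ hσ i hi
    exact hrun w b hv

/-- For a leaf, `rs = [⊤]` and the single subtree `t.subtree 0` is empty. -/
lemma mem_dlang_iff {t : RTree α rank} (ht : t.IsClosed) {a : α} (ha : t.label [] = some a)
    {q : Q} : t ∈ A.dlang q ↔
      ∃ rs, (q, a, rs) ∈ A.delta ∧ ∀ i (hi : i < rs.length), t.subtree i ∈ A.dlang rs[i] := by
  refine ⟨?_, fun ⟨rs, hrs, hsub⟩ => A.mem_dlang_of_mem_delta ht ha hrs hsub⟩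
  rintro ⟨-, π, hπ, rfl⟩
  refine ⟨_, hπ [] a ha, fun i hi => ?_⟩
  by_cases hr : rank a = 0
  · refine A.mem_dlang_of_label_nil_eq_none (ht.subtree i) ?_ _
    by_contra h
    exact absurd (RTree.lt_rank_of_label_cons_ne_none ha h) (by omega)
  · refine ⟨ht.subtree i, fun w => π (i :: w), fun w => hπ (i :: w), ?_⟩
    simp [rhsOf, hr]

lemma dlang_prune_subset (P : Q × α × List Q → Q × α × List Q → Prop) (q : Q) :
    (A.prune P).dlang q ⊆ A.dlang q :=
  fun _ ⟨ht, π, hπ, hq⟩ => ⟨ht, π, fun v a hv => (hπ v a hv).1, hq⟩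

lemma dlang_subset_of_dwIncl {q r : Q} (h : A.dwIncl q r) : A.dlang q ⊆ A.dlang r :=
  fun t ⟨ht, π, hπ, hq⟩ => ⟨ht, h t ht π hπ hq⟩

lemma forall_mem_dlang_of_forall₂ {rs rs' : List Q}
    (h : List.Forall₂ (fun q r => A.dlang q ⊆ A.dlang r) rs rs') {f : ℕ → RTree α rank}
    (hf : ∀ i (hi : i < rs.length), f i ∈ A.dlang rs[i]) :
    ∀ i (hi : i < rs'.length), f i ∈ A.dlang rs'[i] := fun i hi =>
  have hi' : i < rs.length := h.length_eq ▸ hi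
  h.get hi' hi (hf i hi')

theorem dlang_subset_dlang_prune [Finite Q] (R : Q → Q → Prop) [IsTrans Q R] [Std.Irrefl R]
    (hR : ∀ q r, R q r → A.dwIncl q r) {q : Q} {t : RTree α rank} (ht : t ∈ A.dlang q) :
    t ∈ (A.prune (pruneRel Eq (liftStrict (fun x y => R x y ∨ x = y) R))).dlang q := by
  cases ha : t.label [] with
  | none => exact mem_dlang_of_label_nil_eq_none _ ht.1 ha q
  | some a =>
    let S := {rs | (q, a, rs) ∈ A.delta ∧ ∀ i (hi : i < rs.length), t.subtree i ∈ A.dlang rs[i]}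
    have hS : S.Finite := (A.finite_rhs q a).subset fun _ h => h.1
    obtain ⟨rs, ⟨hrs, hsub⟩, hmax⟩ := hS.exists_forall_not_rel
      (r := liftStrict (fun x y => R x y ∨ x = y) R) ((A.mem_dlang_iff ht.1 ha).1 ht)
    have hdw : ∀ q r, R q r ∨ q = r → A.dlang q ⊆ A.dlang r := by
      rintro q r (h | rfl)
      exacts [A.dlang_subset_of_dwIncl (hR q r h), subset_rfl]
    refine ((A.prune _).mem_dlang_iff ht.1 ha).2 ⟨rs, ⟨hrs, ?_⟩, fun i hi =>
      dlang_subset_dlang_prune R hR (hsub i hi)⟩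
    rintro ⟨⟨q', a', rs'⟩, hrs', rfl, rfl, hlt⟩
    exact hmax rs' ⟨hrs', A.forall_mem_dlang_of_forall₂ (hlt.1.imp hdw) hsub⟩ hlt
termination_by t.dom.ncard
decreasing_by exact t.ncard_dom_subtree_lt (by simp [ha]) i

end TDTA

theorem statement_0_general {Q α : Type} [Fintype Q] {rank : α → ℕ}
    (A : TDTA Q α rank) (R : Q → Q → Prop)
    (hirr : ∀ q, ¬R q q) (htrans : ∀ a b c, R a b → R b c → R a c)
    (hsub : ∀ q r, R q r → A.dwIncl q r) :
    (A.prune (pruneRel Eq (liftStrict (fun x y => R x y ∨ x = y) R))).lang = A.lang := by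
  have : IsTrans Q R := ⟨htrans⟩
  have : Std.Irrefl R := ⟨hirr⟩
  ext t
  exact exists_congr fun q => and_congr_right fun _ =>
    ⟨fun ht => A.dlang_prune_subset _ q ht, fun ht => A.dlang_subset_dlang_prune R hsub ht⟩

/-- For every strict partial order `R` contained in downward trace inclusion,
`P(id, R)` is good for pruning. -/
theorem statement_0 {Q α : Type} [Fintype Q] [Fintype α] {rank : α → ℕ}
    (A : TDTA Q α rank) (R : Q → Q → Prop)
    (hirr : ∀ q, ¬R q q) (htrans : ∀ a b c, R a b → R b c → R a c)
    (hsub : ∀ q r, R q r → A.dwIncl q r) :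
    (A.prune (pruneRel Eq (liftStrict (fun x y => R x y ∨ x = y) R))).lang = A.lang :=
  statement_0_general A R hirr htrans hsub
end

section
/- Let A = (Σ, Q, δ, I) be a top-down tree automaton and let V be a relation on Q such that (1) V is a downward simulation on A, and (2) id ⊆ V ⊆ ≼up(V), where ≼up(V) is the maximal upward simulation induced by V. Then V is a downup-relation. -/
/-! Given `V p q` and a run from `p`, build a run from `q` top-down: at each node whose states
are `V`-related, the downward simulation answers the transition of the given run by a
transition with `V`-related targets. The two runs are then `V`-related, hence
`≼up(V)`-related, at every node. -/

namespace RTree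

variable {α : Type} {rank : α → ℕ}

lemma inRunDom_append_singleton {t : RTree α rank} {v : List ℕ} {i : ℕ}
    (h : t.inRunDom (v ++ [i])) : ∃ a, t.label v = some a ∧ i < rank a := by
  rcases h with h | ⟨v', j, a, heq, hl, hj⟩
  · exact t.prefixClosed v i h
  · obtain ⟨rfl, hij⟩ := List.append_inj' heq rfl
    obtain rfl : i = j := by simpa using hij
    exact ⟨a, hl, hj⟩

lemma inRunDom_of_label_eq_some {t : RTree α rank} {v : List ℕ} {a : α}
    (h : t.label v = some a) : t.inRunDom v :=
  Or.inl (by simp [h])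

end RTree

def descend {Q : Type} (step : List ℕ → Q → ℕ → Q) (q : Q) (v : List ℕ) : Q :=
  go v.reverse
where
  go : List ℕ → Q
    | [] => q
    | i :: w => step w.reverse (go w) i

@[simp]
lemma descend_append_singleton {Q : Type} (step : List ℕ → Q → ℕ → Q) (q : Q)
    (v : List ℕ) (i : ℕ) : descend step q (v ++ [i]) = step v (descend step q v) i := by
  simp [descend, descend.go]

namespace TDTA

variable {Q α : Type} {rank : α → ℕ} (A : TDTA Q α rank)

lemma rhsOf_of_rank_ne_zero {a : α} (π : List ℕ → Q) (v : List ℕ) (ha : rank a ≠ 0) :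
    A.rhsOf a π v = (List.range (rank a)).map fun i => π (v ++ [i]) :=
  if_neg ha

lemma forall₂_rhsOf_child {R : Q → Q → Prop} {a : α} {π : List ℕ → Q} {v : List ℕ}
    {rs : List Q} (h : List.Forall₂ R (A.rhsOf a π v) rs) {i : ℕ} (hi : i < rank a) (x : Q) :
    R (π (v ++ [i])) (rs.getD i x) := by
  rw [A.rhsOf_of_rank_ne_zero π v (by omega)] at h
  have hlen : rs.length = rank a := by simpa using h.length_eq.symm
  rw [List.getD_eq_getElem _ _ (hlen ▸ hi)]
  simpa using (List.forall₂_iff_get.mp h).2 i (by simpa using hi) (hlen ▸ hi)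

lemma rhsOf_eq_of_mem_delta {r : Q} {a : α} {rs : List Q} (hτ : (r, a, rs) ∈ A.delta)
    {π : List ℕ → Q} {v : List ℕ} (x : Q) (hπ : ∀ i < rank a, π (v ++ [i]) = rs.getD i x) :
    A.rhsOf a π v = rs := by
  by_cases h0 : rank a = 0
  · simp only [rhsOf, if_pos h0]
    exact ((A.rank_ok _ hτ).1 h0).symm
  · have hlen : rs.length = rank a := (A.rank_ok _ hτ).2 (Nat.pos_of_ne_zero h0)
    rw [A.rhsOf_of_rank_ne_zero π v h0]
    refine List.ext_getElem (by simp [hlen]) fun i hi _ => ?_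
    simp only [List.getElem_map, List.getElem_range]
    rw [hπ i (by simpa using hi), List.getD_eq_getElem _ _ (by simp_all)]

variable {A}

lemma IsDwSim.exists_run {D : Q → Q → Prop} (hD : A.IsDwSim D) {t : RTree α rank}
    {π : List ℕ → Q} (hrun : A.IsRun t π) {q : Q} (hq : D (π []) q) :
    ∃ π', A.IsRun t π' ∧ π' [] = q ∧ ∀ v, t.inRunDom v → D (π v) (π' v) := by
  choose! next hnext using fun p r (h : D p r) => (hD p r h).2
  let step (v : List ℕ) (r : Q) (i : ℕ) : Q :=
    (t.label v).elim r fun a => (next (π v) r a (A.rhsOf a π v)).getD i r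
  set π' := descend step q
  have hchosen {v a} (hv : t.label v = some a) (hV : D (π v) (π' v)) :
      (π' v, a, next (π v) (π' v) a (A.rhsOf a π v)) ∈ A.delta ∧
      List.Forall₂ D (A.rhsOf a π v) (next (π v) (π' v) a (A.rhsOf a π v)) ∧
      ∀ i, π' (v ++ [i]) = (next (π v) (π' v) a (A.rhsOf a π v)).getD i (π' v) := by
    refine ⟨(hnext _ _ hV _ _ (hrun v a hv)).1, (hnext _ _ hV _ _ (hrun v a hv)).2, fun i => ?_⟩
    simp [π', step, hv]
  have hrel : ∀ v, t.inRunDom v → D (π v) (π' v) := by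
    intro v
    induction v using List.reverseRecOn with
    | nil => exact fun _ => hq
    | append_singleton v i ih =>
      intro hvi
      obtain ⟨a, hv, hi⟩ := RTree.inRunDom_append_singleton hvi
      obtain ⟨-, hfor, hchild⟩ := hchosen hv (ih (RTree.inRunDom_of_label_eq_some hv))
      rw [hchild i]
      exact A.forall₂_rhsOf_child hfor hi _
  refine ⟨π', fun v a hv => ?_, rfl, hrel⟩
  obtain ⟨hτ, -, hchild⟩ := hchosen hv (hrel v (RTree.inRunDom_of_label_eq_some hv))
  rwa [A.rhsOf_eq_of_mem_delta hτ _ fun i _ => hchild i]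

end TDTA

theorem statement_2_general {Q α : Type} {rank : α → ℕ}
    (A : TDTA Q α rank) (V : Q → Q → Prop)
    (hsim : A.IsDwSim V)
    (hup : ∀ q r, V q r → A.upSim V q r) :
    A.IsDownUp V := by
  intro p q hpq t π hrun hroot
  obtain ⟨π', hrun', hroot', hrel⟩ := hsim.exists_run hrun (hroot ▸ hpq)
  exact ⟨π', hrun', hroot', fun v hv => hup _ _ (hrel v hv)⟩

/-- Any downward simulation `V` with `id ⊆ V ⊆ ≼up(V)` is a downup-relation. -/
theorem statement_2 {Q α : Type} [Fintype Q] [Fintype α] {rank : α → ℕ}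
    (A : TDTA Q α rank) (V : Q → Q → Prop)
    (hsim : A.IsDwSim V) (hrefl : ∀ q, V q q)
    (hup : ∀ q r, V q r → A.upSim V q r) :
    A.IsDownUp V :=
  statement_2_general A V hsim hup
end

section
/- There exists a top-down tree automaton A = (Σ, Q, δ, I) on which the maximal downward simulation preorder ≼dw is not a downup-relation. -/
/-!
Take one nullary symbol and two non-final states `1` and `2`, both having the single rule
`q ─a→ ⊤`, with only `1` initial. Every rule of `1` is a rule of `2`, so `1 ≼dw 2`. But an
upward simulation must preserve initiality, so a downup-relation can only relate an initial
state that starts some run to initial states; on the one-node tree, the run from `1` would have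
to be matched by a run from `2`, whose root `2` is not initial.
-/

namespace RTree

def single {α : Type} {rank : α → ℕ} (a : α) : RTree α rank where
  label v := if v = [] then some a else none
  finite := (Set.finite_singleton []).subset fun v hv => by by_contra h; simp_all
  prefixClosed v i h := by simp at h

end RTree

namespace TDTA

variable {Q α : Type} {rank : α → ℕ} {A : TDTA Q α rank}

theorem IsRun.single_const {a : α} {q : Q} (ha : rank a = 0)
    (hq : (q, a, [A.top]) ∈ A.delta) : A.IsRun (RTree.single a) fun _ => q := by
  intro v b hv
  obtain ⟨-, rfl⟩ : v = [] ∧ a = b := by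
    by_cases h : v = [] <;> simp_all [RTree.single]
  simpa [rhsOf, ha] using hq

theorem dwSim_of_rules_subset {q r : Q} (htop : q = A.top → r = A.top)
    (hrules : ∀ a qs, (q, a, qs) ∈ A.delta → (r, a, qs) ∈ A.delta) : A.dwSim q r := by
  refine ⟨fun x y => x = y ∨ x = q ∧ y = r, ?_, Or.inr ⟨rfl, rfl⟩⟩
  have hrefl : ∀ qs : List Q, List.Forall₂ (fun x y => x = y ∨ x = q ∧ y = r) qs qs :=
    fun qs => List.forall₂_same.mpr fun x _ => Or.inl rfl
  rintro x y (rfl | ⟨rfl, rfl⟩)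
  · exact ⟨id, fun a qs h => ⟨qs, h, hrefl qs⟩⟩
  · exact ⟨htop, fun a qs h => ⟨qs, hrules a qs h, hrefl qs⟩⟩

theorem upSim.mem_init {R : Q → Q → Prop} {q r : Q} (h : A.upSim R q r) (hq : q ∈ A.init) :
    r ∈ A.init :=
  let ⟨_, hU, hqr⟩ := h
  (hU q r hqr).2.1 hq

theorem IsDownUp.mem_init {W : Q → Q → Prop} (hW : A.IsDownUp W) {t : RTree α rank}
    {π : List ℕ → Q} (hπ : A.IsRun t π) (hroot : t.label [] ≠ none) {q : Q} (hq : W (π []) q)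
    (hinit : π [] ∈ A.init) : q ∈ A.init := by
  obtain ⟨π', -, hπ'root, hup⟩ := hW _ q hq t π hπ rfl
  exact hπ'root ▸ (hup [] (Or.inl hroot)).mem_init hinit

end TDTA

def twoLeafStates : TDTA (Fin 3) Unit fun _ => 0 where
  top := 0
  init := {1}
  delta := {(1, (), [0]), (2, (), [0])}
  rank_ok := by rintro τ (rfl | rfl) <;> simp

/-- There is a tree automaton on which the maximal downward simulation preorder
`≼dw` is not a downup-relation. -/
theorem statement_4 : ∃ (Q α : Type) (_ : Fintype Q) (_ : Fintype α)
    (rank : α → ℕ) (A : TDTA Q α rank), ¬A.IsDownUp A.dwSim := by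
  refine ⟨Fin 3, Unit, inferInstance, inferInstance, _, twoLeafStates, fun hdu => ?_⟩
  have hsim : twoLeafStates.dwSim 1 2 :=
    TDTA.dwSim_of_rules_subset (by decide) fun a qs h => by
      obtain ⟨-, rfl, rfl⟩ | ⟨⟨⟩⟩ := h
      exact Or.inr rfl
  have hrun : twoLeafStates.IsRun (RTree.single ()) fun _ => 1 :=
    TDTA.IsRun.single_const rfl (Or.inl rfl)
  exact absurd (hdu.mem_init hrun (by simp [RTree.single]) hsim rfl) (by simp [twoLeafStates])
end

section
/- There exists a nondeterministic finite word automaton A = (Σ, Q, δ, I, F) for which P(⊂bw, ≼di) is not good for pruning, i.e., L(Prune(A, P(⊂bw, ≼di))) ≠ L(A), where ⊂bw = ⊆bw ∖ (⊆bw)⁻¹ is the strict version of backward trace inclusion and ≼di is the maximal direct forward simulation preorder. (A witness is the 8-state automaton over {a,b,c} of Figure 1(b) of the paper, which loses the word aaa after pruning.) -/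
/-!
The counterexample has states `0, …, 4` (`0` initial, `0` and `2` final) over the letters `a, b`.
It accepts `aaba` along exactly two runs, `0 -a→ 2 -a→ 1 -b→ 4 -a→ 0` and
`0 -a→ 2 -a→ 4 -b→ 3 -a→ 0`, and pruning cuts both: `1 -b→ 4` is dominated by `4 -b→ 3`
since `1 ⊂bw 4` and `4 ≼di 3`, and `3 -a→ 0` is dominated by `4 -a→ 0` since `3 ⊂bw 4`.
No backward simulation relates `3` to `4`, so `3 ⊆bw 4` is certified by a subset construction;
both inclusions are strict because `4` has an `a`-predecessor, which `3` lacks, and a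
`b`-predecessor, which `1` lacks.
-/

/-- A nondeterministic finite word automaton. -/
structure WNFA (Q α : Type) where
  delta : Set (Q × α × Q)
  init : Set Q
  final : Set Q

namespace WNFA

variable {Q α : Type}

/-- Reachability along a word. -/
inductive Reach (A : WNFA Q α) : Q → List α → Q → Prop
  | nil (q : Q) : Reach A q [] q
  | cons {q q' q'' : Q} {a : α} {w : List α} :
      (q, a, q') ∈ A.delta → Reach A q' w q'' → Reach A q (a :: w) q''

/-- The language of the automaton. -/
def lang (A : WNFA Q α) : Set (List α) :=
  {w | ∃ q ∈ A.init, ∃ q' ∈ A.final, A.Reach q w q'}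

/-- `qs` is the sequence of states of a trace on the word `w`
(`qs` has length `w.length + 1`). -/
inductive IsTrace (A : WNFA Q α) : List Q → List α → Prop
  | nil (q : Q) : IsTrace A [q] []
  | cons {q q' : Q} {qs : List Q} {a : α} {w : List α} :
      (q, a, q') ∈ A.delta → IsTrace A (q' :: qs) w → IsTrace A (q :: q' :: qs) (a :: w)

/-- `D` is a direct forward simulation on `A`. -/
def IsDiSim (A : WNFA Q α) (D : Q → Q → Prop) : Prop :=
  ∀ q r, D q r → (q ∈ A.final → r ∈ A.final) ∧
    ∀ a q', (q, a, q') ∈ A.delta → ∃ r', (r, a, r') ∈ A.delta ∧ D q' r'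

/-- The maximal direct forward simulation preorder `≼di`. -/
def diSim (A : WNFA Q α) (q r : Q) : Prop := ∃ D, A.IsDiSim D ∧ D q r

/-- `B` is a backward simulation on `A`. -/
def IsBwSim (A : WNFA Q α) (B : Q → Q → Prop) : Prop :=
  ∀ q r, B q r → (q ∈ A.final → r ∈ A.final) ∧ (q ∈ A.init → r ∈ A.init) ∧
    ∀ a q', (q', a, q) ∈ A.delta → ∃ r', (r', a, r) ∈ A.delta ∧ B q' r'

/-- The maximal backward simulation preorder `≼bw`. -/
def bwSim (A : WNFA Q α) (q r : Q) : Prop := ∃ B, A.IsBwSim B ∧ B q r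

/-- Direct forward trace inclusion `q ⊆di r`. -/
def diIncl (A : WNFA Q α) (q r : Q) : Prop :=
  (q ∈ A.final → r ∈ A.final) ∧
  ∀ w qs, A.IsTrace qs w → qs.head? = some q →
    ∃ rs, A.IsTrace rs w ∧ rs.head? = some r ∧
      List.Forall₂ (fun x y => x ∈ A.final → y ∈ A.final) qs rs

/-- Backward trace inclusion `q ⊆bw r`. -/
def bwIncl (A : WNFA Q α) (q r : Q) : Prop :=
  (q ∈ A.final → r ∈ A.final) ∧ (q ∈ A.init → r ∈ A.init) ∧
  ∀ w qs, A.IsTrace qs w → qs.getLast? = some q →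
    ∃ rs, A.IsTrace rs w ∧ rs.getLast? = some r ∧
      List.Forall₂ (fun x y => (x ∈ A.final → y ∈ A.final) ∧ (x ∈ A.init → y ∈ A.init)) qs rs

/-- Pruning: keep exactly the transitions that are maximal w.r.t. `P`. -/
def prune (A : WNFA Q α) (P : Q × α × Q → Q × α × Q → Prop) : WNFA Q α where
  delta := {τ | τ ∈ A.delta ∧ ¬∃ τ' ∈ A.delta, P τ τ'}
  init := A.init
  final := A.final

end WNFA

/-- The pruning relation `P(Ru, Rd)` on word-automaton transitions. -/
def wPruneRel {Q α : Type} (Ru Rd : Q → Q → Prop) :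
    Q × α × Q → Q × α × Q → Prop :=
  fun τ τ' => Ru τ.1 τ'.1 ∧ τ.2.1 = τ'.2.1 ∧ Rd τ.2.2 τ'.2.2

namespace WNFA

variable {Q α : Type} {A : WNFA Q α}

theorem reach_nil_iff {q q' : Q} : A.Reach q [] q' ↔ q = q' := by
  constructor
  · rintro ⟨⟩
    rfl
  · rintro rfl
    exact .nil q

theorem reach_cons_iff {q q'' : Q} {a : α} {w : List α} :
    A.Reach q (a :: w) q'' ↔ ∃ q', (q, a, q') ∈ A.delta ∧ A.Reach q' w q'' := by
  constructor
  · rintro ⟨⟩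
    exact ⟨_, ‹_›, ‹_›⟩
  · rintro ⟨q', hδ, hr⟩
    exact .cons hδ hr

theorem Reach.mono {B : WNFA Q α} (hδ : A.delta ⊆ B.delta) {q q' : Q} {w : List α}
    (hr : A.Reach q w q') : B.Reach q w q' := by
  induction hr with
  | nil q => exact .nil q
  | cons hτ _ ih => exact .cons (hδ hτ) ih

theorem lang_mono {B : WNFA Q α} (hδ : A.delta ⊆ B.delta) (hI : A.init ⊆ B.init)
    (hF : A.final ⊆ B.final) : A.lang ⊆ B.lang := by
  rintro w ⟨q, hq, q', hq', hr⟩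
  exact ⟨q, hI hq, q', hF hq', hr.mono hδ⟩

theorem lang_prune_subset {P : Q × α × Q → Q × α × Q → Prop} {T : Set (Q × α × Q)}
    (hT : ∀ τ ∈ T, ∃ τ' ∈ A.delta, P τ τ') :
    (A.prune P).lang ⊆ { A with delta := A.delta \ T }.lang :=
  lang_mono (fun τ ⟨hτ, hmax⟩ => ⟨hτ, fun hT' => hmax (hT τ hT')⟩) subset_rfl subset_rfl

theorem diSim_refl (q : Q) : A.diSim q q :=
  ⟨Eq, fun _ _ h => h ▸ ⟨id, fun _ q' hq' => ⟨q', hq', rfl⟩⟩, rfl⟩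

theorem not_bwIncl_of_pred {p q r : Q} {a : α} (hp : (p, a, q) ∈ A.delta)
    (hr : ∀ p', (p', a, r) ∉ A.delta) : ¬ A.bwIncl q r := by
  rintro ⟨-, -, hincl⟩
  obtain ⟨rs, htr, hlast, -⟩ := hincl [a] [p, q] (.cons hp (.nil q)) rfl
  rcases htr with _ | ⟨hδ, ⟨⟩⟩
  cases hlast
  exact hr _ hδ

/-- `S q R` certifies that every trace ending in `q` is matched, flag by flag, by a trace ending
in some state of `R`: the subset construction applied to the backward trace-inclusion game. -/
def IsBwSubsetSim (A : WNFA Q α) (S : Q → Finset Q → Prop) : Prop :=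
  ∀ q R, S q R → R.Nonempty ∧
    (∀ r ∈ R, (q ∈ A.final → r ∈ A.final) ∧ (q ∈ A.init → r ∈ A.init)) ∧
    ∀ a q₀, (q₀, a, q) ∈ A.delta → ∃ R₀, S q₀ R₀ ∧ ∀ r₀ ∈ R₀, ∃ r ∈ R, (r₀, a, r) ∈ A.delta

theorem IsBwSubsetSim.exists_matching_traces {S : Q → Finset Q → Prop}
    (hS : A.IsBwSubsetSim S) {qs : List Q} {w : List α} (htr : A.IsTrace qs w)
    {q : Q} {R : Finset Q} (hlast : qs.getLast? = some q) (hqR : S q R) :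
    ∃ q₀ R₀, qs.head? = some q₀ ∧ S q₀ R₀ ∧ ∀ r₀ ∈ R₀,
      ∃ rs, A.IsTrace rs w ∧ rs.head? = some r₀ ∧ (∃ r ∈ R, rs.getLast? = some r) ∧
        List.Forall₂ (fun x y => (x ∈ A.final → y ∈ A.final) ∧ (x ∈ A.init → y ∈ A.init))
          qs rs := by
  induction htr with
  | nil q' =>
    obtain rfl : q' = q := by simpa using hlast
    exact ⟨q', R, rfl, hqR, fun r hr =>
      ⟨[r], .nil r, rfl, ⟨r, hr, rfl⟩, .cons ((hS q' R hqR).2.1 r hr) .nil⟩⟩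
  | @cons p p' qs a w hδ _ ih =>
    obtain ⟨_, R₁, ⟨⟩, hR₁, hmatch⟩ :=
      ih (by simpa only [List.getLast?_cons_cons] using hlast)
    obtain ⟨R₀, hR₀, hstep⟩ := (hS p' R₁ hR₁).2.2 a p hδ
    refine ⟨p, R₀, rfl, hR₀, fun r₀ hr₀ => ?_⟩
    obtain ⟨r₁, hr₁, hδ'⟩ := hstep r₀ hr₀
    obtain ⟨_ | ⟨_, rs⟩, htr', ⟨⟩, ⟨r, hr, hlast'⟩, hflags⟩ := hmatch r₁ hr₁
    exact ⟨r₀ :: r₁ :: rs, .cons hδ' htr', rfl,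
      ⟨r, hr, by simpa [List.getLast?_cons_cons] using hlast'⟩,
      .cons ((hS p R₀ hR₀).2.1 r₀ hr₀) hflags⟩

theorem IsBwSubsetSim.bwIncl {S : Q → Finset Q → Prop} (hS : A.IsBwSubsetSim S) {q r : Q}
    (hqr : S q {r}) : A.bwIncl q r := by
  obtain ⟨-, hflags, -⟩ := hS q {r} hqr
  refine ⟨(hflags r (Finset.mem_singleton_self r)).1,
    (hflags r (Finset.mem_singleton_self r)).2, fun w qs htr hlast => ?_⟩
  obtain ⟨q₀, R₀, -, hR₀, hmatch⟩ := hS.exists_matching_traces htr hlast hqr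
  obtain ⟨r₀, hr₀⟩ := (hS q₀ R₀ hR₀).1
  obtain ⟨rs, htr', -, ⟨r', hr', hlast'⟩, hflags'⟩ := hmatch r₀ hr₀
  rw [Finset.mem_singleton.mp hr'] at hlast'
  exact ⟨rs, htr', hlast', hflags'⟩

end WNFA

namespace NotGoodForPruning

set_option synthInstance.maxSize 2048

open WNFA

def transitions : List (Fin 5 × Fin 2 × Fin 5) :=
  [(0, 0, 2), (1, 1, 4), (2, 0, 1), (2, 0, 4), (3, 0, 0), (3, 1, 4), (4, 0, 0), (4, 1, 3)]

/-- The letters `0` and `1` stand for `a` and `b`. -/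
def A : WNFA (Fin 5) (Fin 2) := ⟨{τ | τ ∈ transitions}, {0}, {0, 2}⟩

theorem mem_delta {τ : Fin 5 × Fin 2 × Fin 5} : τ ∈ A.delta ↔ τ ∈ transitions := Iff.rfl

theorem mem_init {q : Fin 5} : q ∈ A.init ↔ q = 0 := Iff.rfl

theorem mem_final {q : Fin 5} : q ∈ A.final ↔ q = 0 ∨ q = 2 := Iff.rfl

/-- The identity pairs together with those reached from `(3, {4})` in the subset game. -/
def bwSubsetSim (q : Fin 5) (R : Finset (Fin 5)) : Prop :=
  (q, R) ∈ [(0, {0}), (1, {1}), (1, {4}), (2, {2}), (3, {3}), (3, {4}), (4, {4}), (4, {1, 3})]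

theorem isBwSubsetSim : A.IsBwSubsetSim bwSubsetSim := by
  simp only [IsBwSubsetSim, bwSubsetSim, mem_delta, mem_init, mem_final]
  decide

theorem bwIncl_one_four : A.bwIncl 1 4 :=
  isBwSubsetSim.bwIncl (by simp only [bwSubsetSim]; decide)

theorem bwIncl_three_four : A.bwIncl 3 4 :=
  isBwSubsetSim.bwIncl (by simp only [bwSubsetSim]; decide)

theorem not_bwIncl_four_one : ¬ A.bwIncl 4 1 :=
  not_bwIncl_of_pred (p := 3) (a := 1) (mem_delta.2 (by decide))
    (by simp only [mem_delta]; decide)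

theorem not_bwIncl_four_three : ¬ A.bwIncl 4 3 :=
  not_bwIncl_of_pred (p := 2) (a := 0) (mem_delta.2 (by decide))
    (by simp only [mem_delta]; decide)

def diSimRel (q r : Fin 5) : Prop := q = r ∨ (q = 3 ∧ r = 4) ∨ (q = 4 ∧ r = 3)

theorem isDiSim_diSimRel : A.IsDiSim diSimRel := by
  simp only [IsDiSim, diSimRel, mem_delta, mem_final]
  decide

theorem diSim_four_three : A.diSim 4 3 :=
  ⟨diSimRel, isDiSim_diSimRel, by simp only [diSimRel]; decide⟩

theorem lang_prune_subset_lang_diff :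
    (A.prune (wPruneRel (strictOf A.bwIncl) A.diSim)).lang ⊆
      { A with delta := A.delta \ {(1, 1, 4), (3, 0, 0)} }.lang := by
  refine lang_prune_subset ?_
  rintro τ (rfl | rfl)
  · exact ⟨(4, 1, 3), mem_delta.2 (by decide), ⟨bwIncl_one_four, not_bwIncl_four_one⟩, rfl,
      diSim_four_three⟩
  · exact ⟨(4, 0, 0), mem_delta.2 (by decide), ⟨bwIncl_three_four, not_bwIncl_four_three⟩, rfl,
      diSim_refl 0⟩

theorem aaba_mem_lang : [0, 0, 1, 0] ∈ A.lang := by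
  simp only [lang, Set.mem_ofPred_eq, mem_init, mem_final, reach_cons_iff, reach_nil_iff,
    mem_delta]
  decide

theorem aaba_not_mem_lang_diff :
    [0, 0, 1, 0] ∉ { A with delta := A.delta \ {(1, 1, 4), (3, 0, 0)} }.lang := by
  simp only [lang, Set.mem_ofPred_eq, mem_init, mem_final, reach_cons_iff, reach_nil_iff,
    Set.mem_sdiff, mem_delta, Set.mem_insert_iff, Set.mem_singleton_iff]
  decide

end NotGoodForPruning

/-- There is an NFA for which `P(⊂bw, ≼di)` is not good for pruning. -/
theorem statement_12 : ∃ (Q α : Type) (_ : Fintype Q) (_ : Fintype α)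
    (A : WNFA Q α),
    (A.prune (wPruneRel (strictOf A.bwIncl) A.diSim)).lang ≠ A.lang :=
  ⟨Fin 5, Fin 2, inferInstance, inferInstance, NotGoodForPruning.A, fun h =>
    NotGoodForPruning.aaba_not_mem_lang_diff <|
      NotGoodForPruning.lang_prune_subset_lang_diff (h ▸ NotGoodForPruning.aaba_mem_lang)⟩
end

section
/- There exists a top-down tree automaton A = (Σ, Q, δ, I) for which P(<up(<dw), id) is not good for pruning, i.e., L(Prune(A, P(<up(<dw), id))) ≠ L(A), where <dw = ≼dw ∖ (≼dw)⁻¹ is the strict version of the maximal downward simulation, ≼up(<dw) is the maximal upward simulation induced by <dw, and <up(<dw) = ≼up(<dw) ∖ (≼up(<dw))⁻¹; here P compares rules with equal tuples of target states and <up(<dw)-related source states. (A witness is the automaton of Figure 1(a) of the paper, over Σ₀ = {c,d}, Σ₁ = {b}, Σ₂ = {a}, which loses the tree a(c,d) after pruning.) -/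
/-! The automaton has rules `q₃ -a→ (q₂, q₁)`, `q₃ -a→ (q₁, q₂)`, `q₁ -c→ ⊤`, `q₁ -d→ ⊤`,
`q₂ -d→ ⊤`, with `q₃` initial. Every tree `q₂` accepts, `q₁` accepts too, while `q₁` also accepts
`c`; hence `q₂ <dw q₁`. Because the two `a`-rules are mirror images, this makes `q₁ <up(<dw) q₂`,
so pruning deletes `q₁ -d→ ⊤` in favour of `q₂ -d→ ⊤`. But every run on `a(d, d)` sends `q₁` to
one of the two leaves, so this tree is lost. -/

namespace RTree

variable {α : Type} {rank : α → ℕ}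

def node2Label (a b c : α) : List ℕ → Option α
  | [] => some a
  | [0] => some b
  | [1] => some c
  | _ => none

theorem node2Label_ne_none_iff {a b c : α} {v : List ℕ} :
    node2Label a b c v ≠ none ↔ v = [] ∨ v = [0] ∨ v = [1] := by
  unfold node2Label
  split <;> simp_all

def node2 (a b c : α) (ha : rank a = 2) : RTree α rank where
  label := node2Label a b c
  finite := by
    refine (({[], [0], [1]} : Finset (List ℕ)).finite_toSet).subset fun v hv => ?_
    simpa using node2Label_ne_none_iff.1 hv
  prefixClosed := by
    intro v i hv
    rcases node2Label_ne_none_iff.1 hv with h | h | h <;>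
      simp only [List.append_eq_nil_iff, List.append_eq_singleton_iff, List.cons.injEq,
        and_true, reduceCtorEq, and_false, or_false] at h <;>
      obtain ⟨rfl, rfl⟩ := h <;> exact ⟨a, rfl, by omega⟩

theorem node2_isClosed {a b c : α} {ha : rank a = 2} (hb : rank b = 0) (hc : rank c = 0) : (node2 a b c ha).IsClosed := by
  intro v x hv i hi
  rcases node2Label_ne_none_iff.1 (hv ▸ Option.some_ne_none x) with rfl | rfl | rfl
  all_goals
    obtain rfl : _ = x := Option.some_injective _ hv
    first | omega | (obtain rfl | rfl : i = 0 ∨ i = 1 := by omega) <;> simp [node2, node2Label]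

end RTree

namespace TDTA

variable {Q α : Type} {rank : α → ℕ}

theorem rhsOf_of_rank_eq_zero (A : TDTA Q α rank) {a : α} (ha : rank a = 0)
    (π : List ℕ → Q) (v : List ℕ) : A.rhsOf a π v = [A.top] := by
  simp [rhsOf, ha]

theorem rhsOf_of_rank_eq_two (A : TDTA Q α rank) {a : α} (ha : rank a = 2)
    (π : List ℕ → Q) (v : List ℕ) : A.rhsOf a π v = [π (v ++ [0]), π (v ++ [1])] := by
  simp [rhsOf, ha, List.range_succ]

theorem isRun_node2_iff (A : TDTA Q α rank) {a b c : α} (ha : rank a = 2) (hb : rank b = 0)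
    (hc : rank c = 0) (π : List ℕ → Q) :
    A.IsRun (RTree.node2 a b c ha) π ↔ (π [], a, [π [0], π [1]]) ∈ A.delta ∧
      (π [0], b, [A.top]) ∈ A.delta ∧ (π [1], c, [A.top]) ∈ A.delta := by
  constructor
  · intro h
    refine ⟨?_, ?_, ?_⟩
    · simpa [A.rhsOf_of_rank_eq_two ha] using h [] a rfl
    · simpa [A.rhsOf_of_rank_eq_zero hb] using h [0] b rfl
    · simpa [A.rhsOf_of_rank_eq_zero hc] using h [1] c rfl
  · rintro ⟨hroot, h0, h1⟩ v x hv
    rcases RTree.node2Label_ne_none_iff.1 (hv ▸ Option.some_ne_none x) with rfl | rfl | rfl <;>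
      obtain rfl : _ = x := Option.some_injective _ hv
    · simpa [A.rhsOf_of_rank_eq_two ha] using hroot
    · simpa [A.rhsOf_of_rank_eq_zero hb] using h0
    · simpa [A.rhsOf_of_rank_eq_zero hc] using h1

theorem node2_mem_lang_iff (A : TDTA Q α rank) {a b c : α} (ha : rank a = 2) (hb : rank b = 0)
    (hc : rank c = 0) :
    RTree.node2 a b c ha ∈ A.lang ↔ ∃ q ∈ A.init, ∃ q₀ q₁, (q, a, [q₀, q₁]) ∈ A.delta ∧
      (q₀, b, [A.top]) ∈ A.delta ∧ (q₁, c, [A.top]) ∈ A.delta := by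
  constructor
  · rintro ⟨q, hq, -, π, hπ, rfl⟩
    exact ⟨π [], hq, π [0], π [1], (A.isRun_node2_iff ha hb hc π).1 hπ⟩
  · rintro ⟨q, hq, q₀, q₁, hrules⟩
    let π : List ℕ → Q := fun v => if v = [] then q else if v = [0] then q₀ else q₁
    exact ⟨q, hq, RTree.node2_isClosed hb hc, π, (A.isRun_node2_iff ha hb hc π).2 hrules, rfl⟩

theorem not_mem_prune_delta (A : TDTA Q α rank) {P : Q × α × List Q → Q × α × List Q → Prop}
    {τ τ' : Q × α × List Q} (hτ' : τ' ∈ A.delta) (h : P τ τ') : τ ∉ (A.prune P).delta :=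
  fun hτ => hτ.2 ⟨τ', hτ', h⟩

theorem not_dwSim_of_mem_delta (A : TDTA Q α rank) {q r : Q} {a : α} {qs : List Q}
    (hq : (q, a, qs) ∈ A.delta) (hr : ∀ rs, (r, a, rs) ∉ A.delta) : ¬A.dwSim q r := by
  rintro ⟨D, hD, hqr⟩
  obtain ⟨rs, hrs, -⟩ := (hD q r hqr).2 a qs hq
  exact hr rs hrs

end TDTA

namespace PruneCounterexample

inductive State : Type
  | top | q₁ | q₂ | q₃
  deriving DecidableEq

instance : Fintype State where
  elems := {.top, .q₁, .q₂, .q₃}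
  complete x := by cases x <;> simp

inductive Letter : Type
  | a | c | d
  deriving DecidableEq

instance : Fintype Letter where
  elems := {.a, .c, .d}
  complete x := by cases x <;> simp

open State Letter

def rank : Letter → ℕ
  | a => 2
  | c => 0
  | d => 0

def A : TDTA State Letter rank where
  top := top
  init := {q₃}
  delta := {(q₃, a, [q₂, q₁]), (q₃, a, [q₁, q₂]), (q₁, c, [top]), (q₁, d, [top]), (q₂, d, [top])}
  rank_ok := by
    rintro τ (rfl | rfl | rfl | rfl | rfl) <;> simp [rank]

theorem mem_delta_iff {q : State} {x : Letter} {qs : List State} :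
    (q, x, qs) ∈ A.delta ↔ (q = q₃ ∧ x = a ∧ qs = [q₂, q₁]) ∨ (q = q₃ ∧ x = a ∧ qs = [q₁, q₂]) ∨
      (q = q₁ ∧ x = c ∧ qs = [top]) ∨ (q = q₁ ∧ x = d ∧ qs = [top]) ∨
      (q = q₂ ∧ x = d ∧ qs = [top]) := by
  simp [A]

theorem dwSim_q₂_q₁ : A.dwSim q₂ q₁ := by
  refine ⟨fun q r => q = r ∨ (q = q₂ ∧ r = q₁), ?_, Or.inr ⟨rfl, rfl⟩⟩
  rintro q r (rfl | ⟨rfl, rfl⟩)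
  · exact ⟨id, fun x qs h => ⟨qs, h, List.forall₂_same.2 fun _ _ => Or.inl rfl⟩⟩
  · refine ⟨by simp [A], fun x qs h => ?_⟩
    obtain ⟨rfl, rfl⟩ : x = d ∧ qs = [top] := by simpa [mem_delta_iff] using h
    exact ⟨[top], by simp [A], by simp⟩

theorem not_dwSim_q₁_q₂ : ¬A.dwSim q₁ q₂ :=
  A.not_dwSim_of_mem_delta (a := c) (qs := [top]) (by simp [A]) (by simp [A])

theorem strictOf_dwSim_q₂_q₁ : strictOf A.dwSim q₂ q₁ := ⟨dwSim_q₂_q₁, not_dwSim_q₁_q₂⟩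

theorem upSim_q₁_q₂ : A.upSim (strictOf A.dwSim) q₁ q₂ := by
  refine ⟨fun q r => (q = q₁ ∧ r = q₂) ∨ (q = q₃ ∧ r = q₃), ?_, Or.inl ⟨rfl, rfl⟩⟩
  rintro q r (⟨rfl, rfl⟩ | ⟨rfl, rfl⟩) <;> refine ⟨by simp [A], by simp [A], ?_⟩ <;>
    intro q' x qs hmem i hi <;>
    rcases mem_delta_iff.1 hmem with ⟨rfl, rfl, rfl⟩ | ⟨rfl, rfl, rfl⟩ | ⟨rfl, rfl, rfl⟩ |
      ⟨rfl, rfl, rfl⟩ | ⟨rfl, rfl, rfl⟩ <;>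
    fin_cases i <;> simp at hi
  · refine ⟨q₃, [q₁, q₂], rfl, by simp [A], rfl, Or.inr ⟨rfl, rfl⟩, fun j hj => ?_⟩
    fin_cases j
    exacts [strictOf_dwSim_q₂_q₁, absurd rfl hj]
  · refine ⟨q₃, [q₂, q₁], rfl, by simp [A], rfl, Or.inr ⟨rfl, rfl⟩, fun j hj => ?_⟩
    fin_cases j
    exacts [absurd rfl hj, strictOf_dwSim_q₂_q₁]

theorem not_upSim_q₂_q₁ : ¬A.upSim (strictOf A.dwSim) q₂ q₁ := by
  rintro ⟨U, hU, h⟩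
  obtain ⟨_, rs, _, hmem, hget, -, hsib⟩ :=
    (hU q₂ q₁ h).2.2 q₃ a [q₂, q₁] (by simp [A]) ⟨0, by simp⟩ rfl
  rcases mem_delta_iff.1 hmem with ⟨-, -, rfl⟩ | ⟨-, -, rfl⟩ | ⟨-, h, -⟩ | ⟨-, h, -⟩ | ⟨-, h, -⟩
  · simp at hget
  · exact not_dwSim_q₁_q₂ (hsib ⟨1, by simp⟩ (by simp)).1
  all_goals cases h

theorem strictOf_upSim_q₁_q₂ : strictOf (A.upSim (strictOf A.dwSim)) q₁ q₂ :=
  ⟨upSim_q₁_q₂, not_upSim_q₂_q₁⟩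

def t : RTree Letter rank := RTree.node2 a d d rfl

theorem t_mem_lang : t ∈ A.lang :=
  (A.node2_mem_lang_iff rfl rfl rfl).2 ⟨q₃, rfl, q₂, q₁, by simp [A]⟩

abbrev pruned : TDTA State Letter rank :=
  A.prune (pruneRel (strictOf (A.upSim (strictOf A.dwSim))) Eq)

theorem t_not_mem_lang_pruned : t ∉ pruned.lang := by
  intro ht
  obtain ⟨_, -, p₀, p₁, hroot, h₀, h₁⟩ := (pruned.node2_mem_lang_iff (a := a) rfl rfl rfl).1 ht
  have hq₁ : (q₁, d, [top]) ∉ pruned.delta :=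
    A.not_mem_prune_delta (τ' := (q₂, d, [top])) (by simp [A]) ⟨strictOf_upSim_q₁_q₂, rfl, rfl⟩
  rcases mem_delta_iff.1 hroot.1 with ⟨-, -, h⟩ | ⟨-, -, h⟩ | ⟨-, h, -⟩ | ⟨-, h, -⟩ | ⟨-, h, -⟩
  · obtain ⟨-, rfl⟩ : p₀ = q₂ ∧ p₁ = q₁ := by simpa using h
    exact hq₁ h₁
  · obtain ⟨rfl, -⟩ : p₀ = q₁ ∧ p₁ = q₂ := by simpa using h
    exact hq₁ h₀
  all_goals cases h

end PruneCounterexample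

/-- There is a tree automaton for which `P(<up(<dw), id)` is not good for
pruning. -/
theorem statement_14 : ∃ (Q α : Type) (_ : Fintype Q) (_ : Fintype α)
    (rank : α → ℕ) (A : TDTA Q α rank),
    (A.prune (pruneRel (strictOf (A.upSim (strictOf A.dwSim))) Eq)).lang ≠ A.lang :=
  ⟨_, _, inferInstance, inferInstance, _, PruneCounterexample.A, fun h =>
    PruneCounterexample.t_not_mem_lang_pruned (h ▸ PruneCounterexample.t_mem_lang)⟩
end
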